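/- Unit literal elimination preserves QBF satisfiability: if a PCNF φ = Π.ψ contains a unit clause (l) where the variable of l is existentially quantified in Π, then φ is satisfiable if and only if φ[{l}] is satisfiable. -/
import Mathlib


/-- Variables are natural numbers. -/
abbrev Var := ℕ

/-- A literal is a variable together with a polarity. -/
abbrev Lit := Var × Bool

/-- Negation of a literal. -/
def Lit.negate (l : Lit) : Lit := (l.1, !l.2)

/-- A clause is a finite set of literals (interpreted disjunctively). -/
abbrev Clause := Finset Lit

/-- A cube is a finite set of literals (interpreted conjunctively). -/
abbrev Cube := Finset Lit

/-- A CNF is a finite set of clauses. -/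
abbrev Cnf := Finset Clause

/-- An assignment is a finite set of literals. -/
abbrev Assignment := Finset Lit

/-- An assignment contains no complementary pair of literals. -/
def Assignment.consistent (A : Assignment) : Prop := ∀ l ∈ A, Lit.negate l ∉ A

/-- A total assignment satisfies a literal. -/
def litSat (σ : Var → Bool) (l : Lit) : Prop := σ l.1 = l.2

/-- A total assignment satisfies a clause. -/
def clauseSat (σ : Var → Bool) (C : Clause) : Prop := ∃ l ∈ C, litSat σ l

/-- A total assignment satisfies a CNF (is a propositional model). -/
def cnfSat (σ : Var → Bool) (ψ : Cnf) : Prop := ∀ C ∈ ψ, clauseSat σ C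

/-- A total assignment satisfies a cube. -/
def cubeSat (σ : Var → Bool) (D : Cube) : Prop := ∀ l ∈ D, litSat σ l

/-- Restriction of a clause by an assignment: delete falsified literals. -/
def Clause.restrict (C : Clause) (A : Assignment) : Clause :=
  C.filter (fun l => Lit.negate l ∉ A)

/-- Restriction ψ[A] of a CNF by an assignment: remove satisfied clauses and
delete falsified literals from the remaining clauses. -/
def Cnf.restrict (ψ : Cnf) (A : Assignment) : Cnf :=
  (ψ.filter (fun C => ∀ l ∈ A, l ∉ C)).image (fun C => Clause.restrict C A)

/-- Quantifiers. -/
inductive Quant | ex | all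
deriving DecidableEq

/-- A quantifier prefix: a list of quantified variables (outermost first). -/
abbrev QPrefix := List (Quant × Var)

/-- Restriction of a prefix by an assignment: remove assigned variables. -/
def QPrefix.restrict (pre : QPrefix) (A : Assignment) : QPrefix :=
  pre.filter (fun q => q.2 ∉ A.image Prod.fst)

/-- Satisfiability of the PCNF `pre.ψ`, defined recursively over the prefix:
an existential variable needs one satisfiable branch, a universal variable
both; a quantifier-free CNF is satisfiable iff it is propositionally true. -/
def qbfSat : QPrefix → Cnf → Prop
  | [], ψ => ∃ σ : Var → Bool, cnfSat σ ψ
  | (Quant.ex, x) :: pre, ψ =>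
      qbfSat pre (Cnf.restrict ψ {(x, true)}) ∨ qbfSat pre (Cnf.restrict ψ {(x, false)})
  | (Quant.all, x) :: pre, ψ =>
      qbfSat pre (Cnf.restrict ψ {(x, true)}) ∧ qbfSat pre (Cnf.restrict ψ {(x, false)})

section Aux

lemma mem_cnf_restrict {ψ : Cnf} {A : Assignment} {D : Clause} :
    D ∈ ψ.restrict A ↔ ∃ C ∈ ψ, (∀ l ∈ A, l ∉ C) ∧ D = C.restrict A := by
  simp only [Cnf.restrict, Finset.mem_image, Finset.mem_filter]
  constructor
  · rintro ⟨C, ⟨hC, h2⟩, rfl⟩; exact ⟨C, hC, h2, rfl⟩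
  · rintro ⟨C, hC, h2, rfl⟩; exact ⟨C, ⟨hC, h2⟩, rfl⟩

lemma empty_not_qbfSat : ∀ (pre : QPrefix) (ψ : Cnf), ∅ ∈ ψ → ¬ qbfSat pre ψ
  | [], ψ, h => by
      rintro ⟨σ, hσ⟩
      obtain ⟨l, hl, _⟩ := hσ ∅ h
      exact absurd hl (Finset.notMem_empty l)
  | (Quant.ex, x) :: pre, ψ, h => by
      have h1 : ∀ a : Lit, ∅ ∈ ψ.restrict {a} := fun a =>
        mem_cnf_restrict.2 ⟨∅, h, by simp, by simp [Clause.restrict]⟩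
      rintro (hs | hs)
      · exact empty_not_qbfSat pre _ (h1 _) hs
      · exact empty_not_qbfSat pre _ (h1 _) hs
  | (Quant.all, x) :: pre, ψ, h => by
      have h1 : ∀ a : Lit, ∅ ∈ ψ.restrict {a} := fun a =>
        mem_cnf_restrict.2 ⟨∅, h, by simp, by simp [Clause.restrict]⟩
      rintro ⟨hs, _⟩
      exact empty_not_qbfSat pre _ (h1 _) hs

lemma negate_ne {a b : Lit} (h : a.1 ≠ b.1) : Lit.negate a ≠ b := by
  intro hc; apply h; rw [← hc]; rfl

lemma restrict_comm (ψ : Cnf) (a b : Lit) (h : a.1 ≠ b.1) :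
    (ψ.restrict {a}).restrict {b} = (ψ.restrict {b}).restrict {a} := by
  have key : ∀ (u v : Lit), u.1 ≠ v.1 → ∀ D,
      D ∈ (ψ.restrict {u}).restrict {v} ↔
      ∃ C ∈ ψ, u ∉ C ∧ v ∉ C ∧
        D = C.filter (fun l => Lit.negate l ≠ u ∧ Lit.negate l ≠ v) := by
    intro u v huv D
    simp only [mem_cnf_restrict, Finset.mem_singleton, forall_eq]
    constructor
    · rintro ⟨E, ⟨C, hC, hu, rfl⟩, hv, rfl⟩
      refine ⟨C, hC, hu, ?_, ?_⟩
      · intro hvC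
        exact hv (Finset.mem_filter.2 ⟨hvC, by
          simp only [Finset.mem_singleton]
          exact negate_ne (by simpa using huv.symm)⟩)
      · simp [Clause.restrict, Finset.filter_filter]
    · rintro ⟨C, hC, hu, hv, rfl⟩
      refine ⟨C.restrict {u}, ⟨C, hC, hu, rfl⟩, ?_, ?_⟩
      · intro hvC; exact hv (Finset.mem_filter.1 hvC).1
      · simp [Clause.restrict, Finset.filter_filter]
  ext D
  rw [key a b h D, key b a h.symm D]
  constructor <;> rintro ⟨C, hC, h1, h2, rfl⟩ <;>
    exact ⟨C, hC, h2, h1, by apply Finset.filter_congr; intro l _; simp; tauto⟩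

lemma unit_mem_restrict {ψ : Cnf} {l a : Lit} (h : a.1 ≠ l.1) (hm : ({l} : Clause) ∈ ψ) :
    ({l} : Clause) ∈ ψ.restrict {a} := by
  refine mem_cnf_restrict.2 ⟨{l}, hm, ?_, ?_⟩
  · simp only [Finset.mem_singleton, forall_eq]
    intro hc; rw [hc] at h; exact h rfl
  · symm
    simp only [Clause.restrict]
    rw [Finset.filter_eq_self]
    intro x hx
    rw [Finset.mem_singleton] at hx; subst hx
    simp only [Finset.mem_singleton]
    exact negate_ne (by simpa using h.symm)

lemma prefix_restrict_of_notMem (pre : QPrefix) (l : Lit)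
    (h : l.1 ∉ pre.map Prod.snd) :
    QPrefix.restrict pre {l} = pre := by
  rw [QPrefix.restrict, List.filter_eq_self]
  intro p hp
  simp only [Finset.image_singleton, Finset.mem_singleton, decide_eq_true_eq]
  intro hc
  exact h (List.mem_map.2 ⟨p, hp, by rw [hc]⟩)

lemma prefix_restrict_cons_ne (q : Quant) (x : Var) (pre : QPrefix) (l : Lit)
    (h : x ≠ l.1) :
    QPrefix.restrict ((q, x) :: pre) {l} = (q, x) :: QPrefix.restrict pre {l} := by
  simp only [QPrefix.restrict, List.filter_cons]
  rw [if_pos]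
  simp only [Finset.image_singleton, Finset.mem_singleton, decide_eq_true_eq]
  exact h

lemma prefix_restrict_cons_eq (q : Quant) (pre : QPrefix) (l : Lit) :
    QPrefix.restrict ((q, l.1) :: pre) {l} = QPrefix.restrict pre {l} := by
  simp only [QPrefix.restrict, List.filter_cons]
  rw [if_neg]
  simp

end Aux
/-- Unit literal elimination preserves QBF satisfiability: if the matrix
contains the unit clause `(l)` with the variable of `l` existential, then the
PCNF is satisfiable iff its restriction by `{l}` is satisfiable. -/
theorem unit_literal_elimination
    (pre : QPrefix) (ψ : Cnf) (l : Lit)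
    (hnodup : (pre.map Prod.snd).Nodup)
    (hunit : ({l} : Clause) ∈ ψ)
    (hex : (Quant.ex, l.1) ∈ pre) :
    qbfSat pre ψ ↔ qbfSat (QPrefix.restrict pre {l}) (Cnf.restrict ψ {l}) := by
  obtain ⟨v, bl⟩ := l
  induction pre generalizing ψ with
  | nil => cases hex
  | cons p pre ih =>
    obtain ⟨q, x⟩ := p
    rw [List.map_cons, List.nodup_cons] at hnodup
    obtain ⟨hx, hnd⟩ := hnodup
    by_cases hxl : x = v
    · subst hxl
      have hq : q = Quant.ex := by
        rcases List.mem_cons.1 hex with h | h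
        · exact (congrArg Prod.fst h).symm
        · exact absurd (List.mem_map.2 ⟨_, h, rfl⟩) hx
      subst hq
      rw [show ((Quant.ex, x) :: pre : QPrefix) = ((Quant.ex, ((x, bl) : Lit).1) :: pre) from rfl,
        prefix_restrict_cons_eq, prefix_restrict_of_notMem pre (x, bl) hx]
      have hempty : ∅ ∈ ψ.restrict {(x, !bl)} := by
        refine mem_cnf_restrict.2 ⟨{(x, bl)}, hunit, ?_, ?_⟩
        · simp only [Finset.mem_singleton, forall_eq]
          intro hc
          have := (congrArg Prod.snd hc)
          simp at this
        · symm
          rw [Clause.restrict, Finset.filter_eq_empty_iff]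
          intro a ha
          rw [Finset.mem_singleton] at ha; subst ha
          simp [Lit.negate]
      cases bl with
      | true =>
        constructor
        · rintro (h | h)
          · exact h
          · exact absurd h (empty_not_qbfSat pre _ hempty)
        · exact Or.inl
      | false =>
        constructor
        · rintro (h | h)
          · exact absurd h (empty_not_qbfSat pre _ hempty)
          · exact h
        · exact Or.inr
    · have hex' : (Quant.ex, v) ∈ pre := by
        rcases List.mem_cons.1 hex with h | h
        · exact absurd (congrArg Prod.snd h).symm hxl
        · exact h
      rw [prefix_restrict_cons_ne q x pre (v, bl) hxl]
      have key : ∀ b : Bool, qbfSat pre (ψ.restrict {(x, b)}) ↔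
          qbfSat (QPrefix.restrict pre {((v, bl) : Lit)})
            ((ψ.restrict {((v, bl) : Lit)}).restrict {(x, b)}) := by
        intro b
        rw [restrict_comm ψ (v, bl) (x, b) (fun h => hxl h.symm)]
        exact ih (ψ.restrict {(x, b)}) hnd (unit_mem_restrict hxl hunit) hex'
      cases q with
      | ex => exact or_congr (key true) (key false)
      | all => exact and_congr (key true) (key false)
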